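/- arXiv:1805.03364 — 5 statements merged into one kernel-verified Lean document; each statement's English description precedes it below -/
import Mathlib

section
/- For a monotone Boolean function f on n binary variables and a positive instance x (f(x)=1), every MC-explanation of x, when restricted to its positively-set features, yields a prime implicant of f (i.e., every extension of that partial assignment is positive, and no proper subset has this property). -/
open Finset

def trueCount {n : ℕ} (x : Fin n → Bool) : ℕ :=
  (Finset.univ.filter (fun i => x i = true)).card

def Mono {n : ℕ} (f : (Fin n → Bool) → Bool) : Prop :=
  ∀ x y : Fin n → Bool, (∀ i, x i ≤ y i) → f x ≤ f y

def MCExpl {n : ℕ} (f : (Fin n → Bool) → Bool) (x xs : Fin n → Bool) : Prop :=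
  f xs = true ∧ (∀ i, xs i ≤ x i) ∧
    ∀ x' : Fin n → Bool, f x' = true → (∀ i, x' i ≤ x i) → trueCount xs ≤ trueCount x'

def Suff {n : ℕ} (f : (Fin n → Bool) → Bool) (x : Fin n → Bool) (S : Finset (Fin n)) : Prop :=
  ∀ y : Fin n → Bool, (∀ i ∈ S, y i = x i) → f y = f x

def PIExpl {n : ℕ} (f : (Fin n → Bool) → Bool) (x : Fin n → Bool) (S : Finset (Fin n)) : Prop :=
  Suff f x S ∧ ∀ T ⊂ S, ¬ Suff f x T

/-!
The true features of an MC-explanation `xs` are sufficient by monotonicity, since every instance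
that is true on them lies above `xs`. They are also minimal: if a proper subset `T` were
sufficient, the characteristic vector of `T` would be a positive instance below `x` with fewer
true features than `xs`.
-/

section

variable {n : ℕ}

theorem Mono.eq_true_of_le {f : (Fin n → Bool) → Bool} (hf : Mono f) {x y : Fin n → Bool}
    (hxy : ∀ i, x i ≤ y i) (hx : f x = true) : f y = true :=
  Bool.eq_true_of_true_le (hx ▸ hf x y hxy)

theorem le_of_forall_mem_trueSupport {x y : Fin n → Bool}
    (h : ∀ i ∈ univ.filter (fun i => x i = true), y i = true) (i : Fin n) : x i ≤ y i := by
  cases hxi : x i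
  · exact Bool.false_le _
  · exact (h i (by simp [hxi])).ge

theorem decide_mem_le_of_subset_trueSupport {x : Fin n → Bool} {T : Finset (Fin n)}
    (hT : T ⊆ univ.filter (fun i => x i = true)) (i : Fin n) : decide (i ∈ T) ≤ x i := by
  by_cases hi : i ∈ T
  · simpa [hi] using ((mem_filter.mp (hT hi)).2).ge
  · simp [hi]

theorem trueCount_decide_mem (T : Finset (Fin n)) : trueCount (fun i => decide (i ∈ T)) = #T := by
  simp [trueCount]

end

theorem stmt0_general {n : ℕ} (f : (Fin n → Bool) → Bool) (hf : Mono f)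
    (x xs : Fin n → Bool) (hmc : MCExpl f x xs) :
    (∀ y : Fin n → Bool, (∀ i ∈ Finset.univ.filter (fun i => xs i = true), y i = true) → f y = true) ∧
    ∀ T ⊂ Finset.univ.filter (fun i => xs i = true),
      ¬ ∀ y : Fin n → Bool, (∀ i ∈ T, y i = true) → f y = true := by
  obtain ⟨hfxs, hxs_le, hmin⟩ := hmc
  refine ⟨fun y hy => hf.eq_true_of_le (le_of_forall_mem_trueSupport hy) hfxs, ?_⟩
  intro T hT hsuff
  have hpos : f (fun i => decide (i ∈ T)) = true := hsuff _ (by simp)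
  have hle_x : ∀ i, decide (i ∈ T) ≤ x i := fun i =>
    (decide_mem_le_of_subset_trueSupport hT.subset i).trans (hxs_le i)
  have hcard := hmin _ hpos hle_x
  rw [trueCount_decide_mem] at hcard
  exact absurd (card_lt_card hT) (not_lt.mpr hcard)

theorem stmt0 {n : ℕ} (f : (Fin n → Bool) → Bool) (hf : Mono f)
    (x xs : Fin n → Bool) (hx : f x = true) (hmc : MCExpl f x xs) :
    (∀ y : Fin n → Bool, (∀ i ∈ Finset.univ.filter (fun i => xs i = true), y i = true) → f y = true) ∧
    ∀ T ⊂ Finset.univ.filter (fun i => xs i = true),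
      ¬ ∀ y : Fin n → Bool, (∀ i ∈ T, y i = true) → f y = true :=
  stmt0_general f hf x xs hmc
end

section
/- For a monotone Boolean function f and a positive instance x, every shortest PI-explanation of x sets all of its features positively (to true); i.e., if a PI-explanation contains a feature set to false, it is not of minimum length. -/
open Finset

/-- Pinning a feature to `false` only lowers a monotone function, so once the pinned values make
it positive, that pin is superfluous. -/
theorem Mono.suff_erase_of_eq_false {n : ℕ} {f : (Fin n → Bool) → Bool} (hf : Mono f)
    {x : Fin n → Bool} (hx : f x = true) {S : Finset (Fin n)} (hS : Suff f x S) {i : Fin n}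
    (hxi : x i = false) : Suff f x (S.erase i) := by
  intro y hy
  have hagree : ∀ j ∈ S, Function.update y i false j = x j := by
    intro j hj
    by_cases hji : j = i
    · subst hji
      simp [hxi]
    · rw [Function.update_of_ne hji]
      exact hy j (mem_erase.mpr ⟨hji, hj⟩)
  have hlow : f (Function.update y i false) = true := (hS _ hagree).trans hx
  have hle : ∀ j, Function.update y i false j ≤ y j := by
    intro j
    rw [Function.update_apply]
    split_ifs <;> simp
  rw [hx]
  exact le_antisymm (Bool.le_true _) (hlow ▸ hf _ _ hle)

theorem PIExpl.eq_true_of_mem {n : ℕ} {f : (Fin n → Bool) → Bool} (hf : Mono f)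
    {x : Fin n → Bool} (hx : f x = true) {S : Finset (Fin n)} (hpi : PIExpl f x S) {i : Fin n}
    (hi : i ∈ S) : x i = true := by
  by_contra hxi
  exact hpi.2 (S.erase i) (erase_ssubset hi)
    (hf.suff_erase_of_eq_false hx hpi.1 (Bool.eq_false_iff.mpr hxi))

theorem stmt1_general {n : ℕ} (f : (Fin n → Bool) → Bool) (hf : Mono f)
    (x : Fin n → Bool) (hx : f x = true)
    (S : Finset (Fin n)) (hpi : PIExpl f x S) :
    ∀ i ∈ S, x i = true :=
  fun _ hi => hpi.eq_true_of_mem hf hx hi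

theorem stmt1 {n : ℕ} (f : (Fin n → Bool) → Bool) (hf : Mono f)
    (x : Fin n → Bool) (hx : f x = true)
    (S : Finset (Fin n)) (hpi : PIExpl f x S)
    (hshort : ∀ T : Finset (Fin n), PIExpl f x T → S.card ≤ T.card) :
    ∀ i ∈ S, x i = true :=
  stmt1_general f hf x hx S hpi
end

section
/- For a monotone Boolean function f and a positive instance x, every shortest PI-explanation z of x matches some MC-explanation x* of x, i.e., the total assignment obtained from z by setting all features outside the domain of z to false is an MC-explanation of x. -/
open Finset

/-!
For monotone `f` and positive `x`, a feature set `S` is sufficient for `x` exactly when the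
instance `x|S = extendByFalse x S` is positive, and `x|S` has at most `|S|` true features. Conversely, the true features of any positive `x' ≤ x` form a
sufficient set, which contains a PI-explanation; so a shortest PI-explanation `S` satisfies
`trueCount (x|S) ≤ |S| ≤ trueCount x'`.
-/

section

variable {n : ℕ}

def extendByFalse (x : Fin n → Bool) (S : Finset (Fin n)) : Fin n → Bool :=
  fun i => if i ∈ S then x i else false

lemma extendByFalse_le (x : Fin n → Bool) (S : Finset (Fin n)) (i : Fin n) :
    extendByFalse x S i ≤ x i := by
  unfold extendByFalse
  split_ifs
  · exact le_rfl
  · exact Bool.false_le _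

lemma trueCount_extendByFalse_le_card (x : Fin n → Bool) (S : Finset (Fin n)) :
    trueCount (extendByFalse x S) ≤ S.card := by
  refine card_le_card fun i hi => ?_
  by_contra hiS
  simp [extendByFalse, hiS] at hi

lemma extendByFalse_trueSupport {x x' : Fin n → Bool} (hle : ∀ i, x' i ≤ x i) :
    extendByFalse x (univ.filter fun i => x' i = true) = x' := by
  funext i
  cases hx' : x' i
  · simp [extendByFalse, hx']
  · have hxi : true ≤ x i := hx' ▸ hle i
    simpa [extendByFalse, hx'] using (Bool.le_true _).antisymm hxi

lemma suff_iff_extendByFalse {f : (Fin n → Bool) → Bool} (hf : Mono f) {x : Fin n → Bool}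
    (hx : f x = true) (S : Finset (Fin n)) :
    Suff f x S ↔ f (extendByFalse x S) = true := by
  constructor
  · intro hS
    rw [hS (extendByFalse x S) fun i hi => if_pos hi, hx]
  · intro hxS y hy
    have hxS_le_y : ∀ i, extendByFalse x S i ≤ y i := fun i => by
      unfold extendByFalse
      split_ifs with hi
      · rw [hy i hi]
      · exact Bool.false_le _
    have hy_pos : true ≤ f y := hxS ▸ hf _ _ hxS_le_y
    rw [hx]
    exact (Bool.le_true _).antisymm hy_pos

lemma exists_piExpl_subset {f : (Fin n → Bool) → Bool} {x : Fin n → Bool} {T : Finset (Fin n)}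
    (hT : Suff f x T) : ∃ S ⊆ T, PIExpl f x S := by
  obtain ⟨S, hST, hSmin⟩ := exists_minimal_le_of_wellFoundedLT (Suff f x) T hT
  exact ⟨S, hST, hSmin.prop, fun U hUS hU => hUS.not_ge (hSmin.le_of_le hU hUS.le)⟩

end

theorem stmt3 {n : ℕ} (f : (Fin n → Bool) → Bool) (hf : Mono f)
    (x : Fin n → Bool) (hx : f x = true)
    (S : Finset (Fin n)) (hpi : PIExpl f x S)
    (hshort : ∀ T : Finset (Fin n), PIExpl f x T → S.card ≤ T.card) :
    MCExpl f x (fun i => if i ∈ S then x i else false) := by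
  refine ⟨(suff_iff_extendByFalse hf hx S).1 hpi.1, extendByFalse_le x S, fun x' hx' hle => ?_⟩
  have hsupp : Suff f x (univ.filter fun i => x' i = true) := by
    rwa [suff_iff_extendByFalse hf hx, extendByFalse_trueSupport hle]
  obtain ⟨T, hT, hTpi⟩ := exists_piExpl_subset hsupp
  calc trueCount (extendByFalse x S) ≤ S.card := trueCount_extendByFalse_le_card x S
    _ ≤ T.card := hshort T hTpi
    _ ≤ trueCount x' := card_le_card hT
end

section
/- For a naive Bayes classifier with binary features, if for every feature i the likelihood ratio satisfies Pr(X_i=1|c)/Pr(X_i=1|c̄) ≥ Pr(X_i=0|c)/Pr(X_i=0|c̄), then the decision function f(x) = [Pr(c|x) ≥ T] is a monotone Boolean function of x, for any threshold T ∈ (0,1). -/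
open Finset

noncomputable def jointW {n : ℕ} (p : ℝ) (θ : Fin n → Bool → ℝ) (x : Fin n → Bool) : ℝ :=
  p * ∏ i, θ i (x i)

/-!
The posterior `A / (A + B)` is an increasing function of the odds `A / B`, which factor as
`p / (1 - p) * ∏ i, θ i (x i) / η i (x i)`. By hypothesis each factor is nondecreasing in `x i`,
so the posterior is monotone in `x`, and so is any threshold of it.
-/

theorem div_add_le_div_add_of_mul_le_mul {α : Type*} [Field α] [LinearOrder α] [IsStrictOrderedRing α]
    {a b a' b' : α} (ha : 0 ≤ a) (hb : 0 < b) (ha' : 0 ≤ a') (hb' : 0 < b')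
    (h : a * b' ≤ a' * b) : a / (a + b) ≤ a' / (a' + b') := by
  rw [div_le_div_iff₀ (by positivity) (by positivity)]
  linear_combination h

theorem mul_le_mul_swap_of_div_le_div {θ η : Bool → ℝ} (hη : ∀ b, 0 < η b)
    (hlr : θ false / η false ≤ θ true / η true) {a b : Bool} (hab : a ≤ b) :
    θ a * η b ≤ θ b * η a := by
  rcases a.eq_false_or_eq_true with rfl | rfl <;> rcases b.eq_false_or_eq_true with rfl | rfl
  · exact le_rfl
  · exact absurd hab (by decide)
  · exact (div_le_div_iff₀ (hη false) (hη true)).mp hlr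
  · exact le_rfl

theorem jointW_mul_jointW_le {n : ℕ} {p q : ℝ} {θ η : Fin n → Bool → ℝ}
    (hp : 0 ≤ p) (hq : 0 ≤ q) (hθ : ∀ i b, 0 ≤ θ i b) (hη : ∀ i b, 0 < η i b)
    (hlr : ∀ i, θ i false / η i false ≤ θ i true / η i true)
    {x y : Fin n → Bool} (hxy : x ≤ y) :
    jointW p θ x * jointW q η y ≤ jointW p θ y * jointW q η x := by
  have hprod : (∏ i, θ i (x i)) * ∏ i, η i (y i) ≤ (∏ i, θ i (y i)) * ∏ i, η i (x i) := by
    rw [← prod_mul_distrib, ← prod_mul_distrib]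
    exact prod_le_prod (fun i _ => mul_nonneg (hθ i _) (hη i _).le)
      fun i _ => mul_le_mul_swap_of_div_le_div (hη i) (hlr i) (hxy i)
  calc jointW p θ x * jointW q η y
      = p * q * ((∏ i, θ i (x i)) * ∏ i, η i (y i)) := by unfold jointW; ring
    _ ≤ p * q * ((∏ i, θ i (y i)) * ∏ i, η i (x i)) := by gcongr
    _ = jointW p θ y * jointW q η x := by unfold jointW; ring

theorem monotone_posterior {n : ℕ} {p : ℝ} {θ η : Fin n → Bool → ℝ}
    (hp0 : 0 < p) (hp1 : p < 1) (hθ : ∀ i b, 0 < θ i b) (hη : ∀ i b, 0 < η i b)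
    (hlr : ∀ i, θ i false / η i false ≤ θ i true / η i true) :
    Monotone fun x => jointW p θ x / (jointW p θ x + jointW (1 - p) η x) := by
  have hq : 0 < 1 - p := sub_pos.mpr hp1
  have hA : ∀ x, 0 ≤ jointW p θ x := fun x =>
    (mul_pos hp0 (prod_pos fun i _ => hθ i _)).le
  have hB : ∀ x, 0 < jointW (1 - p) η x := fun x => mul_pos hq (prod_pos fun i _ => hη i _)
  intro x y hxy
  exact div_add_le_div_add_of_mul_le_mul (hA x) (hB x) (hA y) (hB y)
    (jointW_mul_jointW_le hp0.le hq.le (fun i b => (hθ i b).le) hη hlr hxy)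

theorem Monotone.decide_le {α β : Type*} [Preorder α] [Preorder β] [DecidableLE β] {g : α → β}
    (hg : Monotone g) (t : β) : Monotone fun x => decide (t ≤ g x) := by
  intro x y hxy
  simp only [Bool.le_iff_imp, decide_eq_true_eq]
  exact fun h => h.trans (hg hxy)

theorem stmt12_general {n : ℕ} (p : ℝ) (θ η : Fin n → Bool → ℝ)
    (hp0 : 0 < p) (hp1 : p < 1)
    (hθ : ∀ i b, 0 < θ i b ∧ θ i b < 1) (hη : ∀ i b, 0 < η i b ∧ η i b < 1)
    (hlr : ∀ i, θ i false / η i false ≤ θ i true / η i true)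
    (T : ℝ) :
    Mono (fun x : Fin n → Bool =>
      decide (T ≤ jointW p θ x / (jointW p θ x + jointW (1 - p) η x))) :=
  fun _ _ hxy =>
    (monotone_posterior hp0 hp1 (fun i b => (hθ i b).1) (fun i b => (hη i b).1) hlr).decide_le T hxy

theorem stmt12 {n : ℕ} (p : ℝ) (θ η : Fin n → Bool → ℝ)
    (hp0 : 0 < p) (hp1 : p < 1)
    (hθ : ∀ i b, 0 < θ i b ∧ θ i b < 1) (hη : ∀ i b, 0 < η i b ∧ η i b < 1)
    (hlr : ∀ i, θ i false / η i false ≤ θ i true / η i true)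
    (T : ℝ) (hT0 : 0 < T) (hT1 : T < 1) :
    Mono (fun x : Fin n → Bool =>
      decide (T ≤ jointW p θ x / (jointW p θ x + jointW (1 - p) η x))) :=
  stmt12_general p θ η hp0 hp1 hθ hη hlr T
end

section
/- Let f be a Boolean function represented as a conjunction f(x) = g(x) ∧ (x_j = b) for some fixed feature j and value b (i.e., f is g conditioned on a literal). Then every positive instance of f sets x_j = b, and the MC-explanations of a positive instance x of f are exactly the MC-explanations of x under the restricted function h on the remaining features, extended by x_j = b—assuming b = true contributes 1 to cardinality counts uniformly. -/
open Finset

/-!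
Every positive instance of `f` has `x j = b`, so `y ↦ update y j false` maps the positive instances
of `f` below `x` bijectively onto those of `h y = g (update y j b)` below `x` with `j`-th entry
`false`, lowering the true-feature count by the same amount `b.toNat` for each of them. Hence it
preserves and reflects minimality of that count.
-/

open Function

theorem trueCount_eq_update_false_add {n : ℕ} (y : Fin n → Bool) (j : Fin n) :
    trueCount y = trueCount (update y j false) + (y j).toNat := by
  simp only [trueCount, Finset.card_filter]
  rw [Fintype.sum_eq_add_sum_compl j, Fintype.sum_eq_add_sum_compl j]
  have hcompl : ∑ i ∈ {j}ᶜ, (if update y j false i = true then 1 else 0) =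
      ∑ i ∈ {j}ᶜ, if y i = true then 1 else 0 :=
    Finset.sum_congr rfl fun i hi => by rw [update_of_ne (by simpa using hi)]
  rw [hcompl]
  cases y j <;> simp [add_comm]

theorem update_update_false_of_apply_eq {n : ℕ} {y : Fin n → Bool} {j : Fin n} {b : Bool}
    (hy : y j = b) : update (update y j false) j b = y := by
  rw [update_idem, update_eq_self_iff, hy]

section ConjLiteral

variable {n : ℕ} {f g : (Fin n → Bool) → Bool} {j : Fin n} {b : Bool} {x xs : Fin n → Bool}

theorem eq_true_iff_of_eq_and_literal (hfg : ∀ x, f x = (g x && (x j == b))) (y : Fin n → Bool) :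
    f y = true ↔ g y = true ∧ y j = b := by
  rw [hfg, Bool.and_eq_true, beq_iff_eq]

theorem MCExpl.restrict_literal (hfg : ∀ x, f x = (g x && (x j == b))) (hxj : x j = b)
    (hxs : MCExpl f x xs) : MCExpl (fun y => g (update y j b)) x (update xs j false) := by
  obtain ⟨hfxs, hxs_le, hxs_min⟩ := hxs
  obtain ⟨hgxs, hxsj⟩ := (eq_true_iff_of_eq_and_literal hfg xs).mp hfxs
  refine ⟨by simpa only [update_update_false_of_apply_eq hxsj], update_le_iff.mpr
    ⟨Bool.false_le _, fun i _ => hxs_le i⟩, fun x' hx' hx'_le => ?_⟩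
  have hfx' : f (update x' j b) = true :=
    (eq_true_iff_of_eq_and_literal hfg _).mpr ⟨hx', update_self ..⟩
  have hxs_count := hxs_min _ hfx' (update_le_iff.mpr ⟨hxj.ge, fun i _ => hx'_le i⟩)
  rw [trueCount_eq_update_false_add xs j, trueCount_eq_update_false_add (update x' j b) j,
    update_idem, update_self, hxsj] at hxs_count
  have hx'_count := trueCount_eq_update_false_add x' j
  omega

theorem MCExpl.of_restrict_literal (hfg : ∀ x, f x = (g x && (x j == b))) (hxj : x j = b)
    (hxsj : xs j = b) (hxs : MCExpl (fun y => g (update y j b)) x (update xs j false)) :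
    MCExpl f x xs := by
  obtain ⟨hgxs, hxs_le, hxs_min⟩ := hxs
  have hfxs : f xs = true := (eq_true_iff_of_eq_and_literal hfg xs).mpr
    ⟨by simpa only [update_update_false_of_apply_eq hxsj] using hgxs, hxsj⟩
  refine ⟨hfxs, fun i => ?_, fun x' hx' hx'_le => ?_⟩
  · rcases eq_or_ne i j with rfl | hij
    · rw [hxsj, hxj]
    · simpa [update_of_ne hij] using hxs_le i
  · obtain ⟨hgx', hx'j⟩ := (eq_true_iff_of_eq_and_literal hfg x').mp hx'
    have hxs_count := hxs_min (update x' j false)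
      (by simpa only [update_update_false_of_apply_eq hx'j])
      (update_le_iff.mpr ⟨Bool.false_le _, fun i _ => hx'_le i⟩)
    rw [trueCount_eq_update_false_add xs j, trueCount_eq_update_false_add x' j, hxsj, hx'j]
    omega

end ConjLiteral

theorem stmt17 {n : ℕ} (f g : (Fin n → Bool) → Bool) (j : Fin n) (b : Bool)
    (hfg : ∀ x : Fin n → Bool, f x = (g x && (x j == b)))
    (x : Fin n → Bool) (hx : f x = true) :
    (∀ x' : Fin n → Bool, f x' = true → x' j = b) ∧
    ∀ xs : Fin n → Bool, MCExpl f x xs ↔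
      (xs j = b ∧
        MCExpl (fun y => g (Function.update y j b)) x (Function.update xs j false)) := by
  have literal_of_pos := fun y (hy : f y = true) => ((eq_true_iff_of_eq_and_literal hfg y).mp hy).2
  have hxj : x j = b := literal_of_pos x hx
  exact ⟨literal_of_pos, fun xs =>
    ⟨fun hxs => ⟨literal_of_pos xs hxs.1, hxs.restrict_literal hfg hxj⟩,
     fun ⟨hxsj, hxs⟩ => hxs.of_restrict_literal hfg hxj hxsj⟩⟩
end
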